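/- Let f : ℝ³ → [0,∞) be measurable, not almost everywhere zero, with ∫_{ℝ³} (1+|q|)(f + f·|ln f|)(q) dq < ∞, and let n > 0, β > 0, u ∈ ℝ³ be parameters such that the Jüttner distribution J(q) = J(n,β,u;q) has the same five moments as f, i.e. ∫ (J − f) dq/q⁰ = 0, ∫ (J − f) dq = 0 and ∫ qⁱ (J − f) dq/q⁰ = 0 for i = 1,2,3. For a nonnegative function g define σ_g = −∫_{ℝ³} (√(1+|u|²) − u·q/q⁰) g(q) ln(g(q)) dq and e_g = ∫_{ℝ³} (√(1+|u|²) q⁰ − u·q)² g(q) dq/q⁰. Then (σ_J − β e_J) − (σ_f − β e_f) ≥ 0. -/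

import Mathlib

/-!
Write `a(q) = √(1+|u|²) q⁰ − u·q`, `w(q) = a(q)/q⁰ = √(1+|u|²) − u·q/q⁰ ≥ 0` and `c = n/M(β)`,
so that `ln J = ln c − β a`. Since `a²/q⁰ = w a`, every `g ≥ 0` with `(1+|q|)(g + g|ln g|)`
integrable satisfies `σ_g − β e_g = −∫ w (g ln g − g ln J) − ln c ∫ w g`.
The weight `w` is a linear combination of the moment functions `1` and `qⁱ/q⁰`, so `∫ w J = ∫ w f`.
Hence the difference of free energies is the weighted relative entropy `∫ w (f ln f − f ln J)`,
which is nonnegative by Gibbs' inequality `x − y ≤ x ln x − x ln y`.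
-/

open MeasureTheory Real
open scoped InnerProductSpace

noncomputable section

/-- Momentum space `ℝ³`. -/
abbrev E3 := EuclideanSpace ℝ (Fin 3)

/-- `q⁰ = √(1+|q|²)`. -/
def q0 (q : E3) : ℝ := Real.sqrt (1 + ‖q‖ ^ 2)

/-- Modified Bessel function `K_j(β) = ∫₀^∞ cosh(j r) exp(−β cosh r) dr`. -/
def Kb (j : ℕ) (β : ℝ) : ℝ :=
  ∫ r in Set.Ioi (0 : ℝ), Real.cosh (j * r) * Real.exp (-β * Real.cosh r)

end

noncomputable section

/-- `M(β) = ∫_{ℝ³} exp(−β √(1+|p|²)) dp`. -/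
def Mf (β : ℝ) : ℝ := ∫ p : E3, Real.exp (-β * Real.sqrt (1 + ‖p‖ ^ 2))

/-- `Ψ(β) = 3/β + K₁(β)/K₂(β)`. -/
def Ψf (β : ℝ) : ℝ := 3 / β + Kb 1 β / Kb 2 β

/-- The dimensionless Jüttner distribution
`J(n,β,u;q) = (n/M(β)) exp(−β(√(1+|u|²) q⁰ − u·q))`. -/
def Jut (n β : ℝ) (u : E3) (q : E3) : ℝ :=
  n / Mf β * Real.exp (-β * (Real.sqrt (1 + ‖u‖ ^ 2) * q0 q - ⟪u, q⟫_ℝ))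

end

open scoped Nat

theorem sub_le_mul_log_sub_mul_log {x y : ℝ} (hx : 0 ≤ x) (hy : 0 < y) :
    x - y ≤ x * log x - x * log y := by
  rcases hx.eq_or_lt with rfl | hx
  · simp [hy.le]
  calc x - y = x * (1 - (x / y)⁻¹) := by field_simp
    _ ≤ x * log (x / y) := by gcongr; exact one_sub_inv_le_log_of_pos (div_pos hx hy)
    _ = x * log x - x * log y := by rw [log_div hx.ne' hy.ne', mul_sub]

namespace MeasureTheory

variable {α : Type*} [MeasurableSpace α] {μ : Measure α} {w g h ρ : α → ℝ}

theorem Integrable.mul_of_abs_le_mul {C : ℝ} (hρh : Integrable (fun x => ρ x * h x) μ)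
    (hρ : ∀ x, 0 ≤ ρ x) (hg : Measurable g) (hh : Measurable h) (hgρ : ∀ x, |g x| ≤ C * ρ x) :
    Integrable (fun x => g x * h x) μ := by
  refine (hρh.norm.const_mul C).mono' (hg.mul hh).aestronglyMeasurable
    (ae_of_all _ fun x => ?_)
  rw [norm_mul, norm_mul, Real.norm_of_nonneg (hρ x), ← mul_assoc, Real.norm_eq_abs]
  exact mul_le_mul_of_nonneg_right (hgρ x) (norm_nonneg _)

theorem Integrable.mul_of_mul_add_mul_abs_log
    (h : Integrable (fun x => ρ x * (g x + g x * |log (g x)|)) μ) (hρ : ∀ x, 0 ≤ ρ x)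
    (hg : ∀ x, 0 ≤ g x) (hρm : Measurable ρ) (hgm : Measurable g) :
    Integrable (fun x => ρ x * g x) μ :=
  h.mono' (hρm.mul hgm).aestronglyMeasurable <| ae_of_all _ fun x => by
    rw [Real.norm_of_nonneg (mul_nonneg (hρ x) (hg x))]
    exact mul_le_mul_of_nonneg_left
      (le_add_of_nonneg_right (mul_nonneg (hg x) (abs_nonneg _))) (hρ x)

theorem Integrable.mul_mul_log_of_mul_add_mul_abs_log
    (h : Integrable (fun x => ρ x * (g x + g x * |log (g x)|)) μ) (hρ : ∀ x, 0 ≤ ρ x)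
    (hg : ∀ x, 0 ≤ g x) (hρm : Measurable ρ) (hgm : Measurable g) :
    Integrable (fun x => ρ x * (g x * log (g x))) μ :=
  h.mono' (hρm.mul (hgm.mul hgm.log)).aestronglyMeasurable <| ae_of_all _ fun x => by
    rw [norm_mul, norm_mul, Real.norm_of_nonneg (hρ x), Real.norm_of_nonneg (hg x),
      Real.norm_eq_abs]
    exact mul_le_mul_of_nonneg_left (le_add_of_nonneg_left (hg x)) (hρ x)

theorem integral_mul_mul_log_sub_mul_log_nonneg (hw : ∀ x, 0 ≤ w x) (hg : ∀ x, 0 ≤ g x)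
    (hh : ∀ x, 0 < h x) (hwg : Integrable (fun x => w x * g x) μ)
    (hwh : Integrable (fun x => w x * h x) μ)
    (hmass : ∫ x, w x * g x ∂μ = ∫ x, w x * h x ∂μ) :
    0 ≤ ∫ x, w x * (g x * log (g x) - g x * log (h x)) ∂μ := by
  by_cases hint : Integrable (fun x => w x * (g x * log (g x) - g x * log (h x))) μ
  · have hle := integral_mono (by simpa only [mul_sub, Pi.sub_def] using hwg.sub hwh) hint fun x =>
      mul_le_mul_of_nonneg_left (sub_le_mul_log_sub_mul_log (hg x) (hh x)) (hw x)
    rwa [funext fun x => mul_sub (w x) (g x) (h x), integral_sub hwg hwh, hmass, sub_self] at hle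
  · -- the junk value of a non-integrable Bochner integral is `0`
    rw [integral_undef hint]

theorem integrable_one_add_norm_pow_mul_exp_neg {E : Type*} [NormedAddCommGroup E]
    [NormedSpace ℝ E] [FiniteDimensional ℝ E] [MeasurableSpace E] [BorelSpace E]
    {μ : Measure E} [μ.IsAddHaarMeasure] (k : ℕ) {ε : ℝ} (hε : 0 < ε) :
    Integrable (fun x : E => (1 + ‖x‖) ^ k * exp (-(ε * (1 + ‖x‖)))) μ := by
  -- `yᵐ/m! ≤ eʸ` with `m = k + N` leaves the integrable tail `(1+‖x‖)⁻ᴺ`, `N > dim E`.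
  set N := Module.finrank ℝ E + 1
  have hN : (Module.finrank ℝ E : ℝ) < (N : ℕ) := by simp [N]
  refine ((integrable_one_add_norm (μ := μ) hN).const_mul ((k + N)! / ε ^ (k + N))).mono'
    (by fun_prop) (ae_of_all _ fun x => ?_)
  have hx : 0 < 1 + ‖x‖ := by positivity
  have hexp := pow_div_factorial_le_exp (x := ε * (1 + ‖x‖)) (by positivity) (k + N)
  rw [div_le_iff₀ (by positivity), mul_pow] at hexp
  rw [Real.norm_of_nonneg (by positivity), rpow_neg hx.le, rpow_natCast, exp_neg,
    ← div_eq_mul_inv, ← div_eq_mul_inv, div_le_div_iff₀ (exp_pos _) (by positivity),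
    div_mul_eq_mul_div, le_div_iff₀ (by positivity), ← pow_add]
  linarith

end MeasureTheory

@[fun_prop]
theorem continuous_q0 : Continuous q0 := by
  unfold q0; fun_prop

theorem q0_pos (q : E3) : 0 < q0 q := sqrt_pos.2 (by positivity)

theorem norm_lt_q0 (q : E3) : ‖q‖ < q0 q := by
  rw [q0, lt_sqrt (norm_nonneg q)]; linarith

theorem q0_le_one_add_norm (q : E3) : q0 q ≤ 1 + ‖q‖ := by
  rw [q0, sqrt_le_left (by positivity)]
  nlinarith [norm_nonneg q]

theorem one_add_norm_le_two_mul_q0 (q : E3) : 1 + ‖q‖ ≤ 2 * q0 q := by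
  have h : 1 ≤ q0 q := by rw [q0, one_le_sqrt]; nlinarith [norm_nonneg q]
  linarith [norm_lt_q0 q]

theorem abs_inner_le_norm_mul_q0 (u q : E3) : |⟪u, q⟫_ℝ| ≤ ‖u‖ * q0 q :=
  (abs_real_inner_le_norm u q).trans
    (mul_le_mul_of_nonneg_left (norm_lt_q0 q).le (norm_nonneg u))

/-- `U_μ q^μ` for the four-velocity `U = (q0 u, u)` and the four-momentum `(q0 q, q)`. -/
noncomputable def minkowskiDot (u q : E3) : ℝ := q0 u * q0 q - ⟪u, q⟫_ℝ

noncomputable def entropyWeight (u q : E3) : ℝ := q0 u - ⟪u, q⟫_ℝ / q0 q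

@[fun_prop]
theorem continuous_minkowskiDot (u : E3) : Continuous (minkowskiDot u) := by
  unfold minkowskiDot; fun_prop

@[fun_prop]
theorem measurable_entropyWeight (u : E3) : Measurable (entropyWeight u) := by
  unfold entropyWeight; fun_prop

theorem entropyWeight_eq_div (u q : E3) : entropyWeight u q = minkowskiDot u q / q0 q := by
  rw [entropyWeight, minkowskiDot, sub_div, mul_div_cancel_right₀ _ (q0_pos q).ne']

theorem sub_norm_mul_q0_le_minkowskiDot (u q : E3) :
    (q0 u - ‖u‖) * q0 q ≤ minkowskiDot u q := by
  have := (abs_le.1 (abs_inner_le_norm_mul_q0 u q)).2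
  rw [minkowskiDot]; linarith

theorem abs_minkowskiDot_le (u q : E3) : |minkowskiDot u q| ≤ (q0 u + ‖u‖) * q0 q := by
  have := abs_le.1 (abs_inner_le_norm_mul_q0 u q)
  rw [minkowskiDot, abs_le]
  constructor <;> nlinarith [q0_pos u, q0_pos q]

theorem entropyWeight_nonneg (u q : E3) : 0 ≤ entropyWeight u q := by
  rw [entropyWeight_eq_div]
  refine div_nonneg (le_trans ?_ (sub_norm_mul_q0_le_minkowskiDot u q)) (q0_pos q).le
  exact mul_nonneg (sub_nonneg.2 (norm_lt_q0 u).le) (q0_pos q).le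

theorem abs_entropyWeight_le (u q : E3) : |entropyWeight u q| ≤ q0 u + ‖u‖ := by
  rw [entropyWeight_eq_div, abs_div, abs_of_pos (q0_pos q), div_le_iff₀ (q0_pos q)]
  exact abs_minkowskiDot_le u q

theorem minkowskiDot_sq_div_q0 (u q : E3) :
    minkowskiDot u q ^ 2 / q0 q = entropyWeight u q * minkowskiDot u q := by
  rw [entropyWeight_eq_div]; ring

theorem integrable_one_add_norm_pow_mul_exp_neg_mul_minkowskiDot (k : ℕ) (u : E3) {β : ℝ}
    (hβ : 0 < β) : Integrable fun q => (1 + ‖q‖) ^ k * exp (-β * minkowskiDot u q) := by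
  have hgap : 0 < q0 u - ‖u‖ := sub_pos.2 (norm_lt_q0 u)
  have hε : 0 < β * (q0 u - ‖u‖) / 2 := by positivity
  refine (integrable_one_add_norm_pow_mul_exp_neg k hε).mono' (by fun_prop)
    (ae_of_all _ fun q => ?_)
  rw [Real.norm_of_nonneg (by positivity)]
  gcongr
  have := mul_le_mul_of_nonneg_left (sub_norm_mul_q0_le_minkowskiDot u q) hβ.le
  have := mul_le_mul_of_nonneg_left (one_add_norm_le_two_mul_q0 q) (mul_pos hβ hgap).le
  linarith

theorem Mf_pos {β : ℝ} (hβ : 0 < β) : 0 < Mf β :=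
  -- `M(β)` is the case `k = 0`, `u = 0`, where `minkowskiDot 0 q = q0 q`
  integral_exp_pos <| by
    simpa [minkowskiDot, q0] using integrable_one_add_norm_pow_mul_exp_neg_mul_minkowskiDot 0 0 hβ

theorem jut_eq (n β : ℝ) (u q : E3) : Jut n β u q = n / Mf β * exp (-β * minkowskiDot u q) :=
  rfl

theorem jut_pos {n β : ℝ} (hn : 0 < n) (hβ : 0 < β) (u q : E3) : 0 < Jut n β u q := by
  have := Mf_pos hβ
  rw [jut_eq]; positivity

theorem log_jut {n β : ℝ} (hn : n ≠ 0) (hβ : 0 < β) (u q : E3) :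
    log (Jut n β u q) = log (n / Mf β) - β * minkowskiDot u q := by
  rw [jut_eq, log_mul (div_ne_zero hn (Mf_pos hβ).ne') (exp_ne_zero _), log_exp]; ring

@[fun_prop]
theorem continuous_jut (n β : ℝ) (u : E3) : Continuous (Jut n β u) := by
  unfold Jut; fun_prop

theorem integrable_one_add_norm_pow_mul_jut (k : ℕ) (n : ℝ) {β : ℝ} (hβ : 0 < β) (u : E3) :
    Integrable fun q => (1 + ‖q‖) ^ k * Jut n β u q := by
  simpa only [jut_eq, mul_left_comm] using
    (integrable_one_add_norm_pow_mul_exp_neg_mul_minkowskiDot k u hβ).const_mul (n / Mf β)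

theorem abs_log_jut_le {n β : ℝ} (hn : n ≠ 0) (hβ : 0 < β) (u q : E3) :
    |log (Jut n β u q)| ≤ (|log (n / Mf β)| + β * (q0 u + ‖u‖)) * (1 + ‖q‖) := by
  have hq : 1 ≤ 1 + ‖q‖ := by linarith [norm_nonneg q]
  calc |log (Jut n β u q)| ≤ |log (n / Mf β)| + β * |minkowskiDot u q| := by
        rw [log_jut hn hβ]
        exact (abs_sub _ _).trans (by rw [abs_mul, abs_of_pos hβ])
    _ ≤ |log (n / Mf β)| * (1 + ‖q‖) + β * ((q0 u + ‖u‖) * (1 + ‖q‖)) := by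
        gcongr
        · exact le_mul_of_one_le_right (abs_nonneg _) hq
        · exact (abs_minkowskiDot_le u q).trans
            (mul_le_mul_of_nonneg_left (q0_le_one_add_norm q)
              (add_nonneg (q0_pos u).le (norm_nonneg u)))
    _ = _ := by ring

theorem integrable_entropy_jut {n β : ℝ} (hn : n ≠ 0) (hβ : 0 < β) (u : E3) :
    Integrable fun q => (1 + ‖q‖) * (Jut n β u q + Jut n β u q * |log (Jut n β u q)|) := by
  set C := |log (n / Mf β)| + β * (q0 u + ‖u‖)
  have hbound (q : E3) :
      |(1 + ‖q‖) * (1 + |log (Jut n β u q)|)| ≤ (1 + C) * (1 + ‖q‖) ^ 2 := by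
    have := abs_log_jut_le hn hβ u q
    rw [abs_of_nonneg (by positivity)]
    nlinarith [norm_nonneg q, abs_nonneg (log (n / Mf β))]
  refine ((integrable_one_add_norm_pow_mul_jut 2 n hβ u).mul_of_abs_le_mul
    (fun q => by positivity) (by fun_prop) (by fun_prop) hbound).congr
    (ae_of_all _ fun q => by ring)

theorem integrable_entropyWeight_mul (u : E3) {g : E3 → ℝ} (hgm : Measurable g)
    (hg : Integrable fun q => (1 + ‖q‖) * g q) :
    Integrable fun q => entropyWeight u q * g q :=
  hg.mul_of_abs_le_mul (fun q => by positivity) (measurable_entropyWeight u) hgm fun q =>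
    (abs_entropyWeight_le u q).trans <| le_mul_of_one_le_right
      (add_nonneg (q0_pos u).le (norm_nonneg u)) (by linarith [norm_nonneg q])

theorem integral_entropyWeight_mul_eq_zero (u : E3) {g : E3 → ℝ} (hgm : Measurable g)
    (hg : Integrable fun q => (1 + ‖q‖) * g q) (h1 : ∫ q, g q = 0)
    (h2 : ∀ i : Fin 3, ∫ q, q i * g q / q0 q = 0) :
    ∫ q, entropyWeight u q * g q = 0 := by
  have hg1 : Integrable g := hg.norm.mono' hgm.aestronglyMeasurable <| ae_of_all _ fun q => by
    rw [norm_mul, Real.norm_of_nonneg (by positivity : (0 : ℝ) ≤ 1 + ‖q‖)]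
    exact le_mul_of_one_le_left (norm_nonneg _) (by linarith [norm_nonneg q])
  have hgi (i : Fin 3) : Integrable fun q => q i * g q / q0 q := by
    refine (hg.mul_of_abs_le_mul (C := 1) (g := fun q => q i / q0 q) (fun q => by positivity)
      (by fun_prop) hgm fun q => ?_).congr (ae_of_all _ fun q => div_mul_eq_mul_div _ _ _)
    rw [abs_div, abs_of_pos (q0_pos q), div_le_iff₀ (q0_pos q), one_mul, ← Real.norm_eq_abs]
    nlinarith [PiLp.norm_apply_le q i, norm_lt_q0 q, norm_nonneg q]
  have hw (q : E3) : entropyWeight u q * g q = q0 u * g q - ∑ i, u i * (q i * g q / q0 q) := by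
    simp only [entropyWeight, PiLp.inner_apply, RCLike.inner_apply, conj_trivial, Finset.sum_div,
      sub_mul, Finset.sum_mul]
    congr 1; exact Finset.sum_congr rfl fun i _ => by ring
  simp_rw [hw]
  rw [integral_sub (hg1.const_mul _) (integrable_finsetSum _ fun i _ => (hgi i).const_mul _),
    integral_finsetSum _ fun i _ => (hgi i).const_mul _]
  simp [integral_const_mul, h1, h2]

noncomputable def entropyDensity (u : E3) (g : E3 → ℝ) : ℝ :=
  -∫ q, entropyWeight u q * (g q * log (g q))

noncomputable def energyDensity (u : E3) (g : E3 → ℝ) : ℝ :=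
  ∫ q, minkowskiDot u q ^ 2 * g q / q0 q

noncomputable def freeEnergy (u : E3) (β : ℝ) (g : E3 → ℝ) : ℝ :=
  entropyDensity u g - β * energyDensity u g

theorem freeEnergy_eq {n β : ℝ} (hn : n ≠ 0) (hβ : 0 < β) (u : E3) {g : E3 → ℝ}
    (hg0 : ∀ q, 0 ≤ g q) (hgm : Measurable g)
    (hg : Integrable fun q => (1 + ‖q‖) * (g q + g q * |log (g q)|)) :
    freeEnergy u β g =
      -(∫ q, entropyWeight u q * (g q * log (g q) - g q * log (Jut n β u q)))
        - log (n / Mf β) * ∫ q, entropyWeight u q * g q := by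
  have hρ (q : E3) : 0 ≤ 1 + ‖q‖ := by positivity
  have hg1 := hg.mul_of_mul_add_mul_abs_log hρ hg0 (by fun_prop) hgm
  have hwg := integrable_entropyWeight_mul u hgm hg1
  have hwglog : Integrable fun q => entropyWeight u q * (g q * log (g q)) :=
    integrable_entropyWeight_mul u (by fun_prop)
      (hg.mul_mul_log_of_mul_add_mul_abs_log hρ hg0 (by fun_prop) hgm)
  have hC : 0 ≤ q0 u + ‖u‖ := add_nonneg (q0_pos u).le (norm_nonneg u)
  have hwag : Integrable fun q => entropyWeight u q * minkowskiDot u q * g q :=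
    hg1.mul_of_abs_le_mul (C := (q0 u + ‖u‖) ^ 2) hρ (by fun_prop) hgm fun q => by
      rw [abs_mul, sq, mul_assoc]
      exact mul_le_mul (abs_entropyWeight_le u q) ((abs_minkowskiDot_le u q).trans
        (mul_le_mul_of_nonneg_left (q0_le_one_add_norm q) hC)) (abs_nonneg _) hC
  have henergy : (fun q => minkowskiDot u q ^ 2 * g q / q0 q) =
      fun q => entropyWeight u q * minkowskiDot u q * g q :=
    funext fun q => by rw [mul_div_right_comm, minkowskiDot_sq_div_q0]
  have hrel : (fun q => entropyWeight u q * (g q * log (g q) - g q * log (Jut n β u q))) =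
      fun q => entropyWeight u q * (g q * log (g q))
        + β * (entropyWeight u q * minkowskiDot u q * g q)
        - log (n / Mf β) * (entropyWeight u q * g q) :=
    funext fun q => by rw [log_jut hn hβ]; ring
  have hsum : Integrable fun q => entropyWeight u q * (g q * log (g q))
      + β * (entropyWeight u q * minkowskiDot u q * g q) := hwglog.add (hwag.const_mul β)
  rw [freeEnergy, entropyDensity, energyDensity, henergy, hrel,
    integral_sub hsum (hwg.const_mul _),
    integral_add hwglog (hwag.const_mul β), integral_const_mul, integral_const_mul]
  ring

theorem minimum_free_energy_general (f : E3 → ℝ)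
    (hmeas : Measurable f) (hnonneg : ∀ q, 0 ≤ f q)
    (hint : Integrable (fun q =>
      (1 + ‖q‖) * (f q + f q * |Real.log (f q)|)))
    (n β : ℝ) (u : E3) (hn : 0 < n) (hβ : 0 < β)
    (hmom1 : (∫ q : E3, (Jut n β u q - f q)) = 0)
    (hmom2 : ∀ i : Fin 3, (∫ q : E3, q i * (Jut n β u q - f q) / q0 q) = 0) :
    0 ≤ ((-∫ q : E3, (Real.sqrt (1 + ‖u‖ ^ 2) - ⟪u, q⟫_ℝ / q0 q) *
              (Jut n β u q * Real.log (Jut n β u q)))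
          - β * ∫ q : E3, (Real.sqrt (1 + ‖u‖ ^ 2) * q0 q - ⟪u, q⟫_ℝ) ^ 2 *
              Jut n β u q / q0 q)
        - ((-∫ q : E3, (Real.sqrt (1 + ‖u‖ ^ 2) - ⟪u, q⟫_ℝ / q0 q) *
              (f q * Real.log (f q)))
          - β * ∫ q : E3, (Real.sqrt (1 + ‖u‖ ^ 2) * q0 q - ⟪u, q⟫_ℝ) ^ 2 *
              f q / q0 q) := by
  set J := Jut n β u
  have hJm : Measurable J := (continuous_jut n β u).measurable
  have hJ1 : Integrable fun q => (1 + ‖q‖) * J q := by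
    simpa only [pow_one] using integrable_one_add_norm_pow_mul_jut 1 n hβ u
  have hf1 := hint.mul_of_mul_add_mul_abs_log (fun q => by positivity) hnonneg (by fun_prop) hmeas
  have hwJ := integrable_entropyWeight_mul u hJm hJ1
  have hwf := integrable_entropyWeight_mul u hmeas hf1
  have hmass : ∫ q, entropyWeight u q * J q = ∫ q, entropyWeight u q * f q := by
    have hJf : Integrable fun q => (1 + ‖q‖) * (J q - f q) := by
      simpa only [mul_sub, Pi.sub_def] using hJ1.sub hf1
    have h := integral_entropyWeight_mul_eq_zero u (by fun_prop) hJf hmom1 hmom2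
    simp_rw [mul_sub] at h
    rwa [integral_sub hwJ hwf, sub_eq_zero] at h
  have hgibbs := integral_mul_mul_log_sub_mul_log_nonneg (entropyWeight_nonneg u) hnonneg
    (jut_pos hn hβ u) hwf hwJ hmass.symm
  change 0 ≤ freeEnergy u β J - freeEnergy u β f
  rw [freeEnergy_eq hn.ne' hβ u (fun q => (jut_pos hn hβ u q).le) hJm
    (integrable_entropy_jut hn.ne' hβ u), freeEnergy_eq hn.ne' hβ u hnonneg hmeas hint, hmass]
  simp only [sub_self, mul_zero, integral_zero, neg_zero]
  linarith

/-- Minimum free energy principle: if the Jüttner distribution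
`J = J(n,β,u;·)` has the same five moments as `f`, then
`(σ_J − β e_J) − (σ_f − β e_f) ≥ 0`, where for a nonnegative `g`,
`σ_g = −∫ (√(1+|u|²) − u·q/q⁰) g ln g dq` and
`e_g = ∫ (√(1+|u|²) q⁰ − u·q)² g dq/q⁰`. -/
theorem minimum_free_energy (f : E3 → ℝ)
    (hmeas : Measurable f) (hnonneg : ∀ q, 0 ≤ f q)
    (hne : ¬ f =ᵐ[(volume : Measure E3)] 0)
    (hint : Integrable (fun q =>
      (1 + ‖q‖) * (f q + f q * |Real.log (f q)|)))
    (n β : ℝ) (u : E3) (hn : 0 < n) (hβ : 0 < β)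
    (hmom0 : (∫ q : E3, (Jut n β u q - f q) / q0 q) = 0)
    (hmom1 : (∫ q : E3, (Jut n β u q - f q)) = 0)
    (hmom2 : ∀ i : Fin 3, (∫ q : E3, q i * (Jut n β u q - f q) / q0 q) = 0) :
    0 ≤ ((-∫ q : E3, (Real.sqrt (1 + ‖u‖ ^ 2) - ⟪u, q⟫_ℝ / q0 q) *
              (Jut n β u q * Real.log (Jut n β u q)))
          - β * ∫ q : E3, (Real.sqrt (1 + ‖u‖ ^ 2) * q0 q - ⟪u, q⟫_ℝ) ^ 2 *
              Jut n β u q / q0 q)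
        - ((-∫ q : E3, (Real.sqrt (1 + ‖u‖ ^ 2) - ⟪u, q⟫_ℝ / q0 q) *
              (f q * Real.log (f q)))
          - β * ∫ q : E3, (Real.sqrt (1 + ‖u‖ ^ 2) * q0 q - ⟪u, q⟫_ℝ) ^ 2 *
              f q / q0 q) :=
  minimum_free_energy_general f hmeas hnonneg hint n β u hn hβ hmom1 hmom2
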